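/- The forgetful 2-functor GTop^co → Top_≅^co, sending a bounded geometric morphism p : E → S to its codomain S and a commuting-up-to-iso square to its bottom geometric morphism, is a fibration of bicategories: every geometric morphism into the base of a 0-cell has a cartesian lifting (given by pseudopullback of the bounded geometric morphism), and every 2-cell has a cartesian lifting. -/

import Mathlib

open CategoryTheory Bicategory

universe w v u

/-!
We work with an ambient 2-category `T` of elementary toposes (with natural
numbers object), geometric morphisms, and natural transformations, together
with a predicate `Bdd` singling out the bounded geometric morphisms.
`Top_≅` is recovered by restricting 2-cells downstairs to isomorphisms.
-/

/-- 0-cells of `GTop`: bounded geometric morphisms `p : E → S`. -/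
structure GTopObj (T : Type u) [Bicategory.{w, v} T]
    (Bdd : ∀ X Y : T, (X ⟶ Y) → Prop) where
  top : T
  base : T
  p : top ⟶ base
  bounded : Bdd top base p

variable {T : Type u} [Bicategory.{w, v} T] {Bdd : ∀ X Y : T, (X ⟶ Y) → Prop}

/-- 1-cells of `GTop`: squares `(f̄, f̲)` with a specified isomorphism
`f̄ ≫ p₁ ≅ p₀ ≫ f̲`. -/
structure GTopHom (P Q : GTopObj T Bdd) where
  up : P.top ⟶ Q.top
  down : P.base ⟶ Q.base
  sq : up ≫ Q.p ≅ P.p ≫ down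

/-- 2-cells of `GTop`: compatible pairs of natural transformations `(ᾱ, α̲)`,
with the downstairs component `α̲` invertible. -/
@[ext]
structure GTopTwo {P Q : GTopObj T Bdd} (f g : GTopHom P Q) where
  up : f.up ⟶ g.up
  down : f.down ⟶ g.down
  down_isIso : IsIso down
  compat : f.sq.hom ≫ (P.p ◁ down) = (up ▷ Q.p) ≫ g.sq.hom

/-- The hom-categories of `GTop` (vertical composition of 2-cells). -/
instance {P Q : GTopObj T Bdd} : Category (GTopHom P Q) where
  Hom := GTopTwo
  id f := ⟨𝟙 f.up, 𝟙 f.down, inferInstance, by simp⟩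
  comp {f g h} α β :=
    ⟨α.up ≫ β.up, α.down ≫ β.down,
      by haveI := α.down_isIso; haveI := β.down_isIso; infer_instance,
      by
        rw [Bicategory.whiskerLeft_comp, Bicategory.comp_whiskerRight,
          ← Category.assoc, α.compat, Category.assoc, β.compat, ← Category.assoc]⟩
  id_comp α := by apply GTopTwo.ext <;> simp
  comp_id α := by apply GTopTwo.ext <;> simp
  assoc α β γ := by apply GTopTwo.ext <;> simp

/-- Composition of 1-cells of `GTop` (pasting of squares). -/
def GTopHom.comp {P Q R : GTopObj T Bdd} (f : GTopHom P Q) (g : GTopHom Q R) :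
    GTopHom P R where
  up := f.up ≫ g.up
  down := f.down ≫ g.down
  sq := Bicategory.associator _ _ _ ≪≫ Bicategory.whiskerLeftIso f.up g.sq ≪≫
    (Bicategory.associator _ _ _).symm ≪≫ Bicategory.whiskerRightIso f.sq g.down ≪≫
    Bicategory.associator _ _ _

/-- Cartesianness of a 1-cell of `GTop` for the forgetful 2-functor
`GTop^co → Top_≅^co`, in the sense of Buckley's fibrations of bicategories:
the comparison functor from each hom-category `GTop(r, p₀)` to the
pseudopullback of `GTop(r, p₁) → Top_≅(r.base, p₁.base) ← Top_≅(r.base, p₀.base)`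
is essentially surjective and fully faithful. -/
def IsCartesianGTop {P Q : GTopObj T Bdd} (f : GTopHom P Q) : Prop :=
  (∀ (Z : GTopObj T Bdd) (g : GTopHom Z Q) (h : Z.base ⟶ P.base)
      (θ : h ≫ f.down ≅ g.down),
    ∃ (k : GTopHom Z P) (βg : k.comp f ≅ g) (βh : k.down ≅ h),
      GTopTwo.down βg.hom = (βh.hom ▷ f.down) ≫ θ.hom) ∧
  (∀ (Z : GTopObj T Bdd) (k k' : GTopHom Z P) (u : k.comp f ⟶ k'.comp f)
      (d : k.down ⟶ k'.down), IsIso d →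
    GTopTwo.down u = d ▷ f.down →
    ∃! e : k ⟶ k', GTopTwo.down e = d ∧ GTopTwo.up e ▷ f.up = GTopTwo.up u)

/-- A square `w : p ≫ f ≅ q ≫ g` exhibits `P` as a pseudopullback (bilimit) of
`f` and `g`: elementwise statement of the universal property. -/
def IsPseudoPullback {P X Y Z : T} (p : P ⟶ X) (f : X ⟶ Z) (q : P ⟶ Y) (g : Y ⟶ Z)
    (w : p ≫ f ≅ q ≫ g) : Prop :=
  (∀ (W : T) (a : W ⟶ X) (b : W ⟶ Y) (θ : a ≫ f ≅ b ≫ g),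
    ∃ (c : W ⟶ P) (i : c ≫ p ≅ a) (j : c ≫ q ≅ b),
      (i.hom ▷ f) ≫ θ.hom =
        (Bicategory.associator c p f).hom ≫ (c ◁ w.hom) ≫
          (Bicategory.associator c q g).inv ≫ (j.hom ▷ g)) ∧
  (∀ (W : T) (c c' : W ⟶ P) (u : c ≫ p ⟶ c' ≫ p) (v : c ≫ q ⟶ c' ≫ q),
    (Bicategory.associator c p f).hom ≫ (c ◁ w.hom) ≫
        (Bicategory.associator c q g).inv ≫ (v ▷ g) =
      (u ▷ f) ≫ (Bicategory.associator c' p f).hom ≫ (c' ◁ w.hom) ≫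
        (Bicategory.associator c' q g).inv →
    ∃! e : c ⟶ c', (e ▷ p) = u ∧ (e ▷ q) = v)

/-- Cartesianness of a 2-cell `α : f → g` for the fibration
`GTop^co → Top_≅^co` (cocartesianness in `GTop`). -/
def IsCartesianTwoGTop {P Q : GTopObj T Bdd} {f g : GTopHom P Q} (α : f ⟶ g) : Prop :=
  ∀ (h : GTopHom P Q) (β : f ⟶ h) (δ : g.down ⟶ h.down), IsIso δ →
    GTopTwo.down α ≫ δ = GTopTwo.down β →
    ∃! γ : g ⟶ h, GTopTwo.down γ = δ ∧ α ≫ γ = β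

/-!
Cartesian 1-cells come from pseudopullback squares: a lift of `g : Z → Q` over `h` is the map
into the pseudopullback induced by `g.up` and `Z.p ≫ h`, and a 2-cell between two lifts is the
unique 2-cell into the pseudopullback with the prescribed legs. A cartesian lift of an invertible
base 2-cell `δ : F.down ⟶ f'` keeps `F.up` and pastes `δ` onto the square of `F`; as its upper
component is an identity, every 2-cell out of `F` factors through it uniquely.
-/

namespace GTopTwo

variable {P Q : GTopObj T Bdd}

@[simp] lemma comp_up {f g h : GTopHom P Q} (α : f ⟶ g) (β : g ⟶ h) :
    GTopTwo.up (α ≫ β) = GTopTwo.up α ≫ GTopTwo.up β := rfl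
@[simp] lemma comp_down {f g h : GTopHom P Q} (α : f ⟶ g) (β : g ⟶ h) :
    GTopTwo.down (α ≫ β) = GTopTwo.down α ≫ GTopTwo.down β := rfl

@[ext] lemma hom_ext {f g : GTopHom P Q} {α β : f ⟶ g}
    (hu : GTopTwo.up α = GTopTwo.up β) (hd : GTopTwo.down α = GTopTwo.down β) : α = β :=
  GTopTwo.ext hu hd

lemma up_whiskerRight {f g : GTopHom P Q} (α : f ⟶ g) :
    GTopTwo.up α ▷ Q.p = f.sq.hom ≫ P.p ◁ GTopTwo.down α ≫ g.sq.inv := by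
  rw [← Category.assoc, Iso.eq_comp_inv]
  exact α.compat.symm

def mkIso {f g : GTopHom P Q} (u : f.up ≅ g.up) (d : f.down ≅ g.down)
    (compat : f.sq.hom ≫ P.p ◁ d.hom = u.hom ▷ Q.p ≫ g.sq.hom) : f ≅ g where
  hom := ⟨u.hom, d.hom, inferInstance, compat⟩
  inv := ⟨u.inv, d.inv, inferInstance, by
    rw [← cancel_epi (u.hom ▷ Q.p), ← Category.assoc, ← Category.assoc,
      ← comp_whiskerRight, u.hom_inv_id, id_whiskerRight, Category.id_comp, ← compat,
      Category.assoc, ← whiskerLeft_comp, d.hom_inv_id, whiskerLeft_id, Category.comp_id]⟩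

end GTopTwo

namespace GTopHom

variable {P Q R : GTopObj T Bdd}

@[simp] lemma comp_up (f : GTopHom P Q) (g : GTopHom Q R) : (f.comp g).up = f.up ≫ g.up := rfl
@[simp] lemma comp_down (f : GTopHom P Q) (g : GTopHom Q R) :
    (f.comp g).down = f.down ≫ g.down := rfl

lemma comp_sq_hom (f : GTopHom P Q) (g : GTopHom Q R) :
    (f.comp g).sq.hom =
      (α_ f.up g.up R.p).hom ≫ f.up ◁ g.sq.hom ≫ (α_ f.up Q.p g.down).inv ≫
        f.sq.hom ▷ g.down ≫ (α_ P.p f.down g.down).hom := by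
  simp [GTopHom.comp]

section PseudoPullback

variable (F : GTopHom P Q)

theorem exists_lift_of_isPseudoPullback (hF : IsPseudoPullback F.up Q.p P.p F.down F.sq)
    {Z : GTopObj T Bdd} (g : GTopHom Z Q)
    (h : Z.base ⟶ P.base) (θ : h ≫ F.down ≅ g.down) :
    ∃ (k : GTopHom Z P) (βg : k.comp F ≅ g) (βh : k.down ≅ h),
      GTopTwo.down βg.hom = βh.hom ▷ F.down ≫ θ.hom := by
  obtain ⟨c, i, j, hcij⟩ := hF.1 Z.top g.up (Z.p ≫ h)
    (g.sq ≪≫ whiskerLeftIso Z.p θ.symm ≪≫ (α_ Z.p h F.down).symm)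
  have hc : (GTopHom.comp ⟨c, h, j⟩ F).sq.hom ≫ Z.p ◁ θ.hom = i.hom ▷ Q.p ≫ g.sq.hom := by
    simp only [Iso.trans_hom, Iso.symm_hom, whiskerLeftIso_hom] at hcij
    rw [comp_sq_hom, ← reassoc_of% hcij]
    simp
  exact ⟨⟨c, h, j⟩, GTopTwo.mkIso i θ hc, Iso.refl h,
    (by simp : (Iso.refl h).hom ▷ F.down ≫ θ.hom = θ.hom).symm⟩

lemma cone_compat_of_twoCell_comp {Z : GTopObj T Bdd} {k k' : GTopHom Z P}
    (u : k.comp F ⟶ k'.comp F) (d : k.down ⟶ k'.down) (hud : GTopTwo.down u = d ▷ F.down) :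
    (α_ k.up F.up Q.p).hom ≫ k.up ◁ F.sq.hom ≫ (α_ k.up P.p F.down).inv ≫
        (k.sq.hom ≫ Z.p ◁ d ≫ k'.sq.inv) ▷ F.down =
      GTopTwo.up u ▷ Q.p ≫ (α_ k'.up F.up Q.p).hom ≫ k'.up ◁ F.sq.hom ≫
        (α_ k'.up P.p F.down).inv := by
  have hc := u.compat
  rw [comp_sq_hom, comp_sq_hom, hud] at hc
  dsimp only [comp_up, comp_down] at hc ⊢
  refine (cancel_mono (k'.sq.hom ▷ F.down ≫ (α_ Z.p k'.down F.down).hom)).1 ?_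
  simp only [Category.assoc, comp_whiskerRight, inv_hom_whiskerRight_assoc,
    associator_naturality_middle]
  simpa only [Category.assoc] using hc

theorem existsUnique_twoCell_of_isPseudoPullback
    (hF : IsPseudoPullback F.up Q.p P.p F.down F.sq) {Z : GTopObj T Bdd} {k k' : GTopHom Z P}
    (u : k.comp F ⟶ k'.comp F) (d : k.down ⟶ k'.down) (hd : IsIso d)
    (hud : GTopTwo.down u = d ▷ F.down) :
    ∃! e : k ⟶ k', GTopTwo.down e = d ∧ GTopTwo.up e ▷ F.up = GTopTwo.up u := by
  obtain ⟨e, ⟨he_up, he_base⟩, he_unique⟩ :=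
    hF.2 Z.top k.up k'.up (GTopTwo.up u) _ (cone_compat_of_twoCell_comp F u d hud)
  refine ⟨⟨e, d, hd, by rw [he_base]; simp⟩, ⟨rfl, he_up⟩, ?_⟩
  rintro e' ⟨rfl, he'_up⟩
  ext
  · exact he_unique _ ⟨he'_up, GTopTwo.up_whiskerRight e'⟩
  · rfl

theorem isCartesianGTop_of_isPseudoPullback (hF : IsPseudoPullback F.up Q.p P.p F.down F.sq) :
    IsCartesianGTop F :=
  ⟨fun _ g h θ => F.exists_lift_of_isPseudoPullback hF g h θ,
    fun _ _ _ u d hd hud => F.existsUnique_twoCell_of_isPseudoPullback hF u d hd hud⟩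

end PseudoPullback

end GTopHom

section WithDown

variable {P Q : GTopObj T Bdd} (F : GTopHom P Q) {f' : P.base ⟶ Q.base} (δ : F.down ≅ f')

abbrev GTopHom.withDown : GTopHom P Q where
  up := F.up
  down := f'
  sq := F.sq ≪≫ whiskerLeftIso P.p δ

def GTopTwo.toWithDown : F ⟶ F.withDown δ :=
  ⟨𝟙 F.up, δ.hom, δ.isIso_hom, by simp⟩

@[simp] lemma GTopTwo.toWithDown_up : GTopTwo.up (GTopTwo.toWithDown F δ) = 𝟙 F.up := rfl
@[simp] lemma GTopTwo.toWithDown_down : GTopTwo.down (GTopTwo.toWithDown F δ) = δ.hom := rfl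

theorem GTopTwo.isCartesianTwoGTop_toWithDown : IsCartesianTwoGTop (GTopTwo.toWithDown F δ) := by
  intro h β δ' hδ' hβ
  refine ⟨⟨GTopTwo.up (f := F) β, δ', hδ', ?_⟩, ⟨rfl, ?_⟩, ?_⟩
  · simpa [← hβ] using β.compat
  · ext
    · simp
    · simpa using hβ
  · rintro γ ⟨rfl, hγ⟩
    ext
    · simpa using congrArg GTopTwo.up hγ
    · rfl

end WithDown

/-- given that pseudopullbacks of bounded geometric morphisms
along arbitrary geometric morphisms exist (with bounded left leg), the
forgetful 2-functor `GTop^co → Top_≅^co` is a fibration of bicategories in the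
sense of Buckley: every geometric morphism into the base of a 0-cell has a
cartesian lifting (given by pseudopullback), and every (invertible) downstairs
2-cell has a cartesian lifting. -/
theorem gtop_is_fibration_of_bicategories
    (hpb : ∀ (Q : GTopObj T Bdd) (S₀ : T) (f : S₀ ⟶ Q.base),
      ∃ (E₀ : T) (p : E₀ ⟶ S₀) (hb : Bdd E₀ S₀ p) (fup : E₀ ⟶ Q.top)
        (sq : fup ≫ Q.p ≅ p ≫ f), IsPseudoPullback fup Q.p p f sq) :
    (∀ (Q : GTopObj T Bdd) (S₀ : T) (f : S₀ ⟶ Q.base),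
      ∃ (E₀ : T) (p : E₀ ⟶ S₀) (hb : Bdd E₀ S₀ p)
        (F : GTopHom (⟨E₀, S₀, p, hb⟩ : GTopObj T Bdd) Q),
        F.down = f ∧ IsCartesianGTop F) ∧
    (∀ (P Q : GTopObj T Bdd) (F : GTopHom P Q) (f' : P.base ⟶ Q.base)
        (δ : F.down ⟶ f'), IsIso δ →
      ∃ (F' : GTopHom P Q) (hd : F'.down = f') (α : F ⟶ F'),
        GTopTwo.down α ≫ eqToHom hd = δ ∧ IsCartesianTwoGTop α) := by
  refine ⟨fun Q S₀ f => ?_, fun P Q F f' δ _ => ?_⟩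
  · obtain ⟨E₀, p, hb, fup, sq, hsq⟩ := hpb Q S₀ f
    exact ⟨E₀, p, hb, ⟨fup, f, sq⟩, rfl, GTopHom.isCartesianGTop_of_isPseudoPullback _ hsq⟩
  · exact ⟨F.withDown (asIso δ), rfl, GTopTwo.toWithDown F (asIso δ), Category.comp_id δ,
      GTopTwo.isCartesianTwoGTop_toWithDown F (asIso δ)⟩
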